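/- arXiv:1112.6003 — 5 statements merged into one kernel-verified Lean document; each statement's English description precedes it below -/
import Mathlib

section
/- Let a : ℤ^s → ℝ be a finitely supported nonnegative sequence satisfying the basic sum rule, and define the iterated masks a⁽ⁿ⁾ as above. Then the kernels p_{n,m}(i,j) := a⁽ᵐ⁻ⁿ⁾(i - 2^{m-n} j), for n ≤ m, satisfy the Chapman–Kolmogorov equations: for all n ≤ ℓ ≤ m and all i, j ∈ ℤ^s, p_{n,m}(i,j) = ∑_{k ∈ ℤ^s} p_{n,ℓ}(i,k) p_{ℓ,m}(k,j). -/
/-- the kernels `p_{n,m}(i,j) = a⁽ᵐ⁻ⁿ⁾(i - 2^{m-n} j)` satisfy the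
Chapman–Kolmogorov equations. -/
theorem chapman_kolmogorov (s : ℕ) (a : (Fin s → ℤ) → ℝ)
    (ha_nonneg : ∀ i, 0 ≤ a i)
    (ha_fin : (Function.support a).Finite)
    (ha_sum : ∀ i : Fin s → ℤ, ∑ᶠ j : Fin s → ℤ, a (i - 2 • j) = 1)
    (A : ℕ → (Fin s → ℤ) → ℝ)
    (hA0 : ∀ i : Fin s → ℤ, A 0 i = if i = 0 then 1 else 0)
    (hAsucc : ∀ n (i : Fin s → ℤ),
      A (n + 1) i = ∑ᶠ j : Fin s → ℤ, a (i - 2 • j) * A n j)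
    (p : ℕ → ℕ → (Fin s → ℤ) → (Fin s → ℤ) → ℝ)
    (hp : ∀ n m (i j : Fin s → ℤ), n ≤ m →
      p n m i j = A (m - n) (i - 2 ^ (m - n) • j)) :
    ∀ n ℓ m (i j : Fin s → ℤ), n ≤ ℓ → ℓ ≤ m →
      p n m i j = ∑ᶠ k : Fin s → ℤ, p n ℓ i k * p ℓ m k j := by
  -- finiteness of the supports of the iterated masks
  have hAfin : ∀ n, (Function.support (A n)).Finite := by
    intro n
    induction n with
    | zero =>
      apply Set.Finite.subset (Set.finite_singleton (0 : Fin s → ℤ))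
      intro x hx
      rw [Function.mem_support, hA0] at hx
      simp only [Set.mem_singleton_iff]
      by_contra h
      rw [if_neg h] at hx
      exact hx rfl
    | succ n ih =>
      apply Set.Finite.subset ((ha_fin.prod ih).image (fun q => q.1 + 2 • q.2))
      intro x hx
      rw [Function.mem_support, hAsucc] at hx
      have : ∃ j, a (x - 2 • j) * A n j ≠ 0 := by
        by_contra h
        push_neg at h
        exact hx (finsum_eq_zero_of_forall_eq_zero h)
      obtain ⟨j, hj⟩ := this
      rcases mul_ne_zero_iff.mp hj with ⟨h1, h2⟩
      exact ⟨(x - 2 • j, j), Set.mk_mem_prod h1 h2, by simp⟩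
  -- the key convolution (semigroup) identity
  have key : ∀ q pp (x : Fin s → ℤ),
      A (pp + q) x = ∑ᶠ k : Fin s → ℤ, A pp (x - 2 ^ pp • k) * A q k := by
    intro q pp
    induction pp with
    | zero =>
      intro x
      rw [zero_add]
      have h1 : ∀ k, k ≠ x → A 0 (x - 2 ^ 0 • k) * A q k = 0 := by
        intro k hk
        rw [hA0, if_neg, zero_mul]
        simp only [pow_zero, one_smul]
        intro h
        exact hk (sub_eq_zero.mp h).symm
      rw [finsum_eq_single _ x h1, hA0]
      simp
    | succ pp ih =>
      intro x
      -- the finite set of relevant `j`'s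
      have hJ : ({j : Fin s → ℤ | x - 2 • j ∈ Function.support a}).Finite := by
        apply Set.Finite.preimage _ ha_fin
        intro u _ v _ h
        exact smul_right_injective (Fin s → ℤ) two_ne_zero (sub_right_injective h)
      set J : Finset (Fin s → ℤ) := hJ.toFinset with hJdef
      set K : Finset (Fin s → ℤ) := (hAfin q).toFinset with hKdef
      have hsuppJ : ∀ (g : (Fin s → ℤ) → ℝ),
          Function.support (fun j => a (x - 2 • j) * g j) ⊆ J := by
        intro g j hj
        rw [hJdef, Set.Finite.coe_toFinset]
        simp only [Set.mem_setOf_eq, Function.mem_support]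
        intro h0
        exact hj (by simp only [h0, zero_mul])
      have hsuppK : ∀ (g : (Fin s → ℤ) → ℝ),
          Function.support (fun k => g k * A q k) ⊆ K := by
        intro g k hk
        rw [hKdef, Set.Finite.coe_toFinset]
        simp only [Function.mem_support]
        intro h0
        exact hk (by simp only [h0, mul_zero])
      have inner : ∀ k : Fin s → ℤ,
          A (pp + 1) (x - 2 ^ (pp + 1) • k)
            = ∑ j ∈ J, a (x - 2 • j) * A pp (j - 2 ^ pp • k) := by
        intro k
        rw [hAsucc]
        rw [← finsum_comp_equiv (Equiv.subRight ((2 : ℕ) ^ pp • k))]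
        have harith : ∀ j : Fin s → ℤ,
            x - 2 ^ (pp + 1) • k - 2 • (j - 2 ^ pp • k) = x - 2 • j := by
          intro j
          rw [smul_sub, pow_succ', mul_smul]
          abel
        have hcong : (fun j : Fin s → ℤ =>
              a (x - 2 ^ (pp + 1) • k - 2 • (Equiv.subRight ((2 : ℕ) ^ pp • k) j))
                * A pp (Equiv.subRight ((2 : ℕ) ^ pp • k) j))
            = fun j => a (x - 2 • j) * A pp (j - 2 ^ pp • k) := by
          funext j
          simp only [Equiv.subRight_apply, harith j]
        rw [show (∑ᶠ j : Fin s → ℤ,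
              a (x - 2 ^ (pp + 1) • k - 2 • (Equiv.subRight ((2 : ℕ) ^ pp • k) j))
                * A pp (Equiv.subRight ((2 : ℕ) ^ pp • k) j))
            = ∑ᶠ j : Fin s → ℤ, a (x - 2 • j) * A pp (j - 2 ^ pp • k) from by
          rw [hcong]]
        exact finsum_eq_sum_of_support_subset _ (hsuppJ fun j => A pp (j - 2 ^ pp • k))
      calc A (pp + 1 + q) x = A ((pp + q) + 1) x := by ring_nf
        _ = ∑ᶠ j : Fin s → ℤ, a (x - 2 • j) * A (pp + q) j := hAsucc _ x
        _ = ∑ j ∈ J, a (x - 2 • j) * A (pp + q) j :=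
            finsum_eq_sum_of_support_subset _ (hsuppJ (A (pp + q)))
        _ = ∑ j ∈ J, a (x - 2 • j) * ∑ k ∈ K, A pp (j - 2 ^ pp • k) * A q k := by
            refine Finset.sum_congr rfl fun j _ => ?_
            rw [ih j, finsum_eq_sum_of_support_subset _ (hsuppK fun k => A pp (j - 2 ^ pp • k))]
        _ = ∑ k ∈ K, (∑ j ∈ J, a (x - 2 • j) * A pp (j - 2 ^ pp • k)) * A q k := by
            simp only [Finset.mul_sum, Finset.sum_mul]
            rw [Finset.sum_comm]
            exact Finset.sum_congr rfl fun k _ => Finset.sum_congr rfl fun j _ => by ring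
        _ = ∑ k ∈ K, A (pp + 1) (x - 2 ^ (pp + 1) • k) * A q k := by
            refine Finset.sum_congr rfl fun k _ => ?_
            rw [inner k]
        _ = ∑ᶠ k : Fin s → ℤ, A (pp + 1) (x - 2 ^ (pp + 1) • k) * A q k :=
            (finsum_eq_sum_of_support_subset _
              (hsuppK fun k => A (pp + 1) (x - 2 ^ (pp + 1) • k))).symm
  -- main statement
  intro n ℓ m i j hnl hlm
  rw [hp n m i j (hnl.trans hlm)]
  have hmn : m - n = (ℓ - n) + (m - ℓ) := by omega
  rw [hmn, key (m - ℓ) (ℓ - n)]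
  have hg : ∀ k, p n ℓ i k * p ℓ m k j
      = A (ℓ - n) (i - 2 ^ (ℓ - n) • k) * A (m - ℓ) (k - 2 ^ (m - ℓ) • j) := by
    intro k
    rw [hp n ℓ i k hnl, hp ℓ m k j hlm]
  rw [finsum_congr hg]
  refine Eq.trans ?_ (finsum_comp_equiv (Equiv.addRight ((2 : ℕ) ^ (m - ℓ) • j)))
  apply finsum_congr
  intro k
  simp only [Equiv.coe_addRight]
  congr 2
  · rw [pow_add, mul_smul, smul_add]
    abel
  · abel
end

section
/- Let ρ be the Minkowski functional of a convex, balanced, compact set C ⊆ ℝ^s with 0 in its interior, and suppose the mask a : ℤ^s → ℝ is nonnegative with support contained in C. If i, j ∈ ℤ^s satisfy a⁽ⁿ⁾(i - 2ⁿ j) ≠ 0, then ρ(i - 2ⁿ j) ≤ 2ⁿ. Consequently, if ρ(i) ≤ 2ⁿ and a⁽ⁿ⁾(i - 2ⁿ j) ≠ 0, then ρ(j) ≤ 2. -/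
/-- if the mask is supported in a convex balanced compact set `C`
with `0` in its interior and Minkowski functional `ρ = gauge C`, then
`a⁽ⁿ⁾(i - 2ⁿ j) ≠ 0` implies `ρ(i - 2ⁿ j) ≤ 2ⁿ`; consequently `ρ(i) ≤ 2ⁿ`
forces `ρ(j) ≤ 2`. -/
theorem iterated_mask_gauge_bound (s : ℕ) (C : Set (Fin s → ℝ))
    (hconv : Convex ℝ C)
    (hbal : Balanced ℝ C)
    (hcpt : IsCompact C)
    (h0 : (0 : Fin s → ℝ) ∈ interior C)
    (a : (Fin s → ℤ) → ℝ)
    (ha_nonneg : ∀ i, 0 ≤ a i)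
    (ha_fin : (Function.support a).Finite)
    (ha_supp : ∀ i : Fin s → ℤ, a i ≠ 0 → (fun k => (i k : ℝ)) ∈ C)
    (A : ℕ → (Fin s → ℤ) → ℝ)
    (hA0 : ∀ i : Fin s → ℤ, A 0 i = if i = 0 then 1 else 0)
    (hAsucc : ∀ n (i : Fin s → ℤ),
      A (n + 1) i = ∑ᶠ j : Fin s → ℤ, a (i - 2 • j) * A n j) :
    ∀ (n : ℕ) (i j : Fin s → ℤ),
      (A n (i - 2 ^ n • j) ≠ 0 →
        gauge C (fun k => ((i - 2 ^ n • j) k : ℝ)) ≤ 2 ^ n) ∧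
      (gauge C (fun k => (i k : ℝ)) ≤ 2 ^ n → A n (i - 2 ^ n • j) ≠ 0 →
        gauge C (fun k => (j k : ℝ)) ≤ 2) := by
  have habs : Absorbent ℝ C := absorbent_nhds_zero (mem_interior_iff_mem_nhds.1 h0)
  set f : (Fin s → ℤ) → (Fin s → ℝ) := fun i k => (i k : ℝ) with hf
  have hfadd : ∀ x y : Fin s → ℤ, f (x + y) = f x + f y := by
    intro x y; funext k; simp [hf]
  have hfsmul : ∀ (c : ℕ) (x : Fin s → ℤ), f (c • x) = (c : ℝ) • f x := by
    intro c x; funext k; simp [hf]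
  have hadd : ∀ x y : Fin s → ℝ, gauge C (x + y) ≤ gauge C x + gauge C y :=
    gauge_add_le hconv habs
  -- key: support bound for A n
  have key : ∀ (n : ℕ) (m : Fin s → ℤ), A n m ≠ 0 → gauge C (f m) ≤ 2 ^ n - 1 := by
    intro n
    induction n with
    | zero =>
      intro m hm
      rw [hA0] at hm
      by_cases h : m = 0
      · subst h
        have : f (0 : Fin s → ℤ) = 0 := by funext k; simp [hf]
        rw [this, gauge_zero]; norm_num
      · simp [h] at hm
    | succ n ih =>
      intro m hm
      rw [hAsucc] at hm
      obtain ⟨j, hj⟩ : ∃ j, a (m - 2 • j) * A n j ≠ 0 := by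
        by_contra h
        push_neg at h
        exact hm (finsum_eq_zero_of_forall_eq_zero h)
      obtain ⟨ha1, hA1⟩ := mul_ne_zero_iff.1 hj
      have hmem := ha_supp _ ha1
      have h1 : gauge C (f (m - 2 • j)) ≤ 1 := gauge_le_one_of_mem hmem
      have h2 : gauge C (f j) ≤ 2 ^ n - 1 := ih j hA1
      have hsplit : f m = f (m - 2 • j) + (2 : ℝ) • f j := by
        funext k
        simp only [hf, Pi.add_apply, Pi.smul_apply, Pi.sub_apply, smul_eq_mul,
          nsmul_eq_mul, Pi.mul_apply, Pi.ofNat_apply]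
        simp only [Pi.natCast_apply, Nat.cast_ofNat]
        push_cast
        ring
      calc gauge C (f m) ≤ gauge C (f (m - 2 • j)) + gauge C ((2:ℝ) • f j) := by
            rw [hsplit]; exact hadd _ _
        _ = gauge C (f (m - 2 • j)) + 2 * gauge C (f j) := by
            rw [gauge_smul_of_nonneg (by norm_num : (0:ℝ) ≤ 2), smul_eq_mul]
        _ ≤ 1 + 2 * (2 ^ n - 1) := by
            have := mul_le_mul_of_nonneg_left h2 (by norm_num : (0:ℝ) ≤ 2)
            linarith
        _ = 2 ^ (n + 1) - 1 := by ring
  intro n i j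
  constructor
  · intro h
    calc gauge C (f (i - 2 ^ n • j)) ≤ 2 ^ n - 1 := key n _ h
      _ ≤ 2 ^ n := by norm_num
  · intro hi h
    have hm : gauge C (f (i - 2 ^ n • j)) ≤ 2 ^ n := le_trans (key n _ h) (by norm_num)
    have hsym : ∀ x ∈ C, -x ∈ C := fun x hx => by
      simpa using hbal.neg_mem_iff.2 hx
    have hsplit : f ((2 ^ n : ℕ) • j) = f i + -f (i - 2 ^ n • j) := by
      funext k; simp only [hf, Pi.add_apply, Pi.neg_apply, Pi.sub_apply,
        Pi.smul_apply, smul_eq_mul, nsmul_eq_mul, Pi.mul_apply, Pi.ofNat_apply,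
        Pi.pow_apply]; push_cast; ring
    have : gauge C (f ((2 ^ n : ℕ) • j)) ≤ 2 ^ n + 2 ^ n := by
      rw [hsplit]
      refine le_trans (hadd _ _) ?_
      rw [gauge_neg hsym]
      exact add_le_add hi hm
    rw [hfsmul, gauge_smul_of_nonneg (by positivity : (0:ℝ) ≤ ((2^n : ℕ) : ℝ)),
      smul_eq_mul] at this
    have hcast : ((2^n : ℕ) : ℝ) = 2^n := by push_cast; ring
    rw [hcast] at this
    have hpos : (0:ℝ) < 2^n := by positivity
    nlinarith [this, hpos]
end

section
/- Let (X,d) be a complete CAT(0) space and let S be the barycentric subdivision operator for a nonnegative mask a satisfying the basic sum rule, i.e. (Sx)_i = argmin_z ∑_j a(i − 2j) d(x_j, z)². Then for all n ≥ 1, all i ∈ ℤ^s, all z₀ ∈ X, and all bounded x : ℤ^s → X: d((Sⁿx)_i, z₀) ≤ ∑_k a⁽ⁿ⁾(i − 2ⁿ k) d(x_k, z₀), where a⁽ⁿ⁾ are the iterated masks. -/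
/-! If `b` minimises `F z = ∑ⱼ wⱼ d(pⱼ, z)²`, the CN inequality at the midpoint `m` of `b` and `z`
gives `F m ≤ (F b + F z) / 2 - d(b, z)² / 4` with `d(b, m) = d(b, z) / 2`; since `F b ≤ F m`,
iterating this gives the variance inequality `F b + d(b, z)² ≤ F z`. Together with
`d(pⱼ, z₀)² - d(pⱼ, b)² ≤ 2 d(b, z₀) d(pⱼ, z₀) - d(b, z₀)²` it yields Jensen's inequality
`d(b, z₀) ≤ ∑ⱼ wⱼ d(pⱼ, z₀)`. The iterated estimate then follows by induction on `n`, because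
`a⁽ⁿ⁺¹⁾(i - 2ⁿ⁺¹k) = ∑ⱼ a(i - 2j) a⁽ⁿ⁾(j - 2ⁿk)`. -/

open Function

section Finsum

variable {ι κ : Type*}

theorem finsum_mul_eq_sum_toFinset {w : ι → ℝ} (hw : (support w).Finite) (g : ι → ℝ) :
    ∑ᶠ j, w j * g j = ∑ j ∈ hw.toFinset, w j * g j :=
  finsum_eq_sum_of_support_subset _ <| by
    rw [hw.coe_toFinset]; exact support_mul_subset_left w g

theorem finsum_mul_le_finsum_mul {w f g : ι → ℝ} (hw : (support w).Finite) (hw₀ : ∀ j, 0 ≤ w j)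
    (hfg : ∀ j, f j ≤ g j) : ∑ᶠ j, w j * f j ≤ ∑ᶠ j, w j * g j :=
  finsum_le_finsum' (hw.subset (support_mul_subset_left _ _))
    (hw.subset (support_mul_subset_left _ _)) fun j => mul_le_mul_of_nonneg_left (hfg j) (hw₀ j)

theorem finsum_mul_finsum_comm {u : ι → ℝ} {v : ι → κ → ℝ} (hu : (support u).Finite)
    (hv : ∀ j, (support (v j)).Finite) :
    ∑ᶠ j, u j * ∑ᶠ k, v j k = ∑ᶠ k, ∑ᶠ j, u j * v j k := by
  simp_rw [finsum_mul_eq_sum_toFinset hu, mul_finsum]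
  rw [sum_finsum_comm _ _ fun j _ => (hv j).subset (support_mul_subset_right _ _)]

end Finsum

section CNInequality

variable {X : Type*} [PseudoMetricSpace X]

/-- The Bruhat–Tits CN inequality for `m` with respect to `x₀, x₁`; in a CAT(0) space it holds
for the midpoint of `x₀` and `x₁`. -/
def IsCNMidpoint (x₀ x₁ m : X) : Prop :=
  ∀ z : X, dist z m ^ 2 ≤
    (1 / 2) * dist z x₀ ^ 2 + (1 / 2) * dist z x₁ ^ 2 - (1 / 4) * dist x₀ x₁ ^ 2

namespace IsCNMidpoint

variable {x₀ x₁ m : X}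

theorem dist_right_le (h : IsCNMidpoint x₀ x₁ m) : dist x₁ m ≤ dist x₀ x₁ / 2 := by
  have h₁ := h x₁
  rw [dist_self, dist_comm x₁ x₀] at h₁
  nlinarith [dist_nonneg (x := x₁) (y := m), dist_nonneg (x := x₀) (y := x₁)]

theorem half_dist_le_dist_left (h : IsCNMidpoint x₀ x₁ m) : dist x₀ x₁ / 2 ≤ dist x₀ m := by
  linarith [dist_triangle_right x₀ x₁ m, h.dist_right_le]

theorem sum_mul_sq_dist_le (h : IsCNMidpoint x₀ x₁ m) {ι : Type*} {t : Finset ι} {w : ι → ℝ}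
    (hw₀ : ∀ j ∈ t, 0 ≤ w j) (hw₁ : ∑ j ∈ t, w j = 1) (p : ι → X) :
    ∑ j ∈ t, w j * dist (p j) m ^ 2 ≤
      (1 / 2) * ∑ j ∈ t, w j * dist (p j) x₀ ^ 2 + (1 / 2) * ∑ j ∈ t, w j * dist (p j) x₁ ^ 2
        - (1 / 4) * dist x₀ x₁ ^ 2 := by
  calc ∑ j ∈ t, w j * dist (p j) m ^ 2
      ≤ ∑ j ∈ t, w j * ((1 / 2) * dist (p j) x₀ ^ 2 + (1 / 2) * dist (p j) x₁ ^ 2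
          - (1 / 4) * dist x₀ x₁ ^ 2) :=
        Finset.sum_le_sum fun j hj => mul_le_mul_of_nonneg_left (h (p j)) (hw₀ j hj)
    _ = _ := by
        simp only [mul_sub, mul_add, Finset.sum_sub_distrib, Finset.sum_add_distrib,
          Finset.mul_sum, ← Finset.sum_mul, hw₁]
        ring_nf

end IsCNMidpoint

theorem add_sq_dist_le_of_forall_le {F : X → ℝ} {b : X} (hb : ∀ z, F b ≤ F z)
    (hmid : ∀ z, ∃ m, dist b z / 2 ≤ dist b m ∧
      F m ≤ (1 / 2) * F b + (1 / 2) * F z - (1 / 4) * dist b z ^ 2) (z : X) :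
    F b + dist b z ^ 2 ≤ F z := by
  -- A midpoint step towards `b` turns a valid constant `κ` into `(κ + 1) / 2`.
  have hκ : ∀ k : ℕ, ∀ z, (1 - (1 / 2 : ℝ) ^ k) * dist b z ^ 2 ≤ F z - F b := by
    intro k
    induction k with
    | zero => intro z; simpa using hb z
    | succ k ih =>
      intro z
      obtain ⟨m, hm_dist, hm_F⟩ := hmid z
      have hsq : dist b z ^ 2 / 4 ≤ dist b m ^ 2 := by
        nlinarith [dist_nonneg (x := b) (y := z)]
      have hκ₀ : 0 ≤ 1 - (1 / 2 : ℝ) ^ k :=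
        sub_nonneg.2 (pow_le_one₀ (by norm_num) (by norm_num))
      calc (1 - (1 / 2 : ℝ) ^ (k + 1)) * dist b z ^ 2
          = 2 * ((1 - (1 / 2 : ℝ) ^ k) * (dist b z ^ 2 / 4) + dist b z ^ 2 / 4) := by ring
        _ ≤ 2 * ((1 - (1 / 2 : ℝ) ^ k) * dist b m ^ 2 + dist b z ^ 2 / 4) := by gcongr
        _ ≤ 2 * (F m - F b + dist b z ^ 2 / 4) := by gcongr; exact ih m
        _ ≤ F z - F b := by linarith
  have hlim : Filter.Tendsto (fun k : ℕ => (1 - (1 / 2 : ℝ) ^ k) * dist b z ^ 2) Filter.atTop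
      (nhds ((1 - 0) * dist b z ^ 2)) :=
    (tendsto_const_nhds.sub
      (tendsto_pow_atTop_nhds_zero_of_lt_one (by norm_num) (by norm_num))).mul_const _
  have := le_of_tendsto' hlim fun k => hκ k z
  linarith

theorem dist_le_sum_of_forall_sum_sq_dist_le (hX : ∀ x₀ x₁ : X, ∃ m, IsCNMidpoint x₀ x₁ m)
    {ι : Type*} {t : Finset ι} {w : ι → ℝ} (hw₀ : ∀ j ∈ t, 0 ≤ w j) (hw₁ : ∑ j ∈ t, w j = 1)
    {p : ι → X} {b : X}
    (hb : ∀ z, ∑ j ∈ t, w j * dist (p j) b ^ 2 ≤ ∑ j ∈ t, w j * dist (p j) z ^ 2) (z₀ : X) :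
    dist b z₀ ≤ ∑ j ∈ t, w j * dist (p j) z₀ := by
  set D := dist b z₀
  have hvar := add_sq_dist_le_of_forall_le hb (fun z => (hX b z).imp fun m hm =>
    ⟨hm.half_dist_le_dist_left, hm.sum_mul_sq_dist_le hw₀ hw₁ p⟩) z₀
  -- `d(pⱼ, b) ≥ |d(pⱼ, z₀) - D|` by the triangle inequality.
  have hterm : ∀ j, dist (p j) z₀ ^ 2 - dist (p j) b ^ 2 ≤ 2 * D * dist (p j) z₀ - D ^ 2 := by
    intro j
    have h₁ := dist_triangle (p j) b z₀
    have h₂ := dist_triangle_left b z₀ (p j)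
    nlinarith [dist_nonneg (x := p j) (y := b)]
  have hD : D ^ 2 ≤ 2 * D * ∑ j ∈ t, w j * dist (p j) z₀ - D ^ 2 :=
    calc D ^ 2 ≤ ∑ j ∈ t, w j * (dist (p j) z₀ ^ 2 - dist (p j) b ^ 2) := by
          simp only [mul_sub, Finset.sum_sub_distrib]; linarith
      _ ≤ ∑ j ∈ t, w j * (2 * D * dist (p j) z₀ - D ^ 2) :=
          Finset.sum_le_sum fun j hj => mul_le_mul_of_nonneg_left (hterm j) (hw₀ j hj)
      _ = 2 * D * ∑ j ∈ t, w j * dist (p j) z₀ - D ^ 2 * ∑ j ∈ t, w j := by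
          rw [Finset.mul_sum, Finset.mul_sum, ← Finset.sum_sub_distrib]
          exact Finset.sum_congr rfl fun j _ => by ring
      _ = 2 * D * ∑ j ∈ t, w j * dist (p j) z₀ - D ^ 2 := by rw [hw₁, mul_one]
  have hT : 0 ≤ ∑ j ∈ t, w j * dist (p j) z₀ :=
    Finset.sum_nonneg fun j hj => mul_nonneg (hw₀ j hj) dist_nonneg
  nlinarith [dist_nonneg (x := b) (y := z₀)]

theorem dist_le_finsum_of_forall_finsum_sq_dist_le (hX : ∀ x₀ x₁ : X, ∃ m, IsCNMidpoint x₀ x₁ m)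
    {ι : Type*} {w : ι → ℝ} (hw : (support w).Finite) (hw₀ : ∀ j, 0 ≤ w j) (hw₁ : ∑ᶠ j, w j = 1)
    {p : ι → X} {b : X}
    (hb : ∀ z, ∑ᶠ j, w j * dist (p j) b ^ 2 ≤ ∑ᶠ j, w j * dist (p j) z ^ 2) (z₀ : X) :
    dist b z₀ ≤ ∑ᶠ j, w j * dist (p j) z₀ := by
  rw [finsum_eq_sum _ hw] at hw₁
  simp_rw [finsum_mul_eq_sum_toFinset hw] at hb ⊢
  exact dist_le_sum_of_forall_sum_sq_dist_le hX (fun j _ => hw₀ j) hw₁ hb z₀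

end CNInequality

section Mask

variable {M : Type*} [AddCommGroup M]

theorem finite_support_comp_sub_nsmul [IsAddTorsionFree M] {g : M → ℝ} (hg : (support g).Finite)
    {m : ℕ} (hm : m ≠ 0) (i : M) : (support fun j => g (i - m • j)).Finite := by
  have hinj : Injective fun j : M => i - m • j :=
    (sub_right_injective).comp (IsAddTorsionFree.nsmul_right_injective hm)
  exact hg.preimage hinj.injOn

theorem finite_support_finsum_comp_sub_nsmul_mul {a B : M → ℝ} (ha : (support a).Finite)
    (hB : (support B).Finite) (m : ℕ) :
    (support fun i => ∑ᶠ j, a (i - m • j) * B j).Finite := by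
  refine ((ha.prod hB).image fun q : M × M => q.1 + m • q.2).subset fun i hi => ?_
  obtain ⟨j, hj⟩ := not_forall.1 fun h => hi (finsum_eq_zero_of_forall_eq_zero h)
  exact ⟨(i - m • j, j), ⟨left_ne_zero_of_mul hj, right_ne_zero_of_mul hj⟩, sub_add_cancel i _⟩

variable {a : M → ℝ} {A : ℕ → M → ℝ}
  (hAsucc : ∀ n i, A (n + 1) i = ∑ᶠ j, a (i - 2 • j) * A n j)
include hAsucc

theorem finite_support_of_succ_eq_finsum (ha : (support a).Finite) (hA1 : A 1 = a) :
    ∀ n, 1 ≤ n → (support (A n)).Finite := by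
  intro n hn
  induction n, hn using Nat.le_induction with
  | base => rwa [hA1]
  | succ n _ ih =>
    rw [show A (n + 1) = _ from funext (hAsucc n)]
    exact finite_support_finsum_comp_sub_nsmul_mul ha ih 2

theorem apply_succ_sub_pow_nsmul (n : ℕ) (i k : M) :
    A (n + 1) (i - 2 ^ (n + 1) • k) = ∑ᶠ j, a (i - 2 • j) * A n (j - 2 ^ n • k) := by
  rw [hAsucc, ← finsum_comp_equiv (Equiv.subRight (2 ^ n • k))]
  refine finsum_congr fun j => ?_
  rw [Equiv.subRight_apply, smul_sub, smul_smul, ← pow_succ', sub_sub_sub_cancel_right]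

end Mask

theorem iterated_scheme_jensen_general (s : ℕ) (X : Type*) [MetricSpace X]
    (hHad : ∀ x₀ x₁ : X, ∃ y : X, ∀ z : X,
      dist z y ^ 2 ≤ (1 / 2) * dist z x₀ ^ 2 + (1 / 2) * dist z x₁ ^ 2
        - (1 / 4) * dist x₀ x₁ ^ 2)
    (a : (Fin s → ℤ) → ℝ)
    (ha_nonneg : ∀ i, 0 ≤ a i)
    (ha_fin : (Function.support a).Finite)
    (ha_sum : ∀ i : Fin s → ℤ, ∑ᶠ j : Fin s → ℤ, a (i - 2 • j) = 1)
    (A : ℕ → (Fin s → ℤ) → ℝ)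
    (hA1 : A 1 = a)
    (hAsucc : ∀ n (i : Fin s → ℤ),
      A (n + 1) i = ∑ᶠ j : Fin s → ℤ, a (i - 2 • j) * A n j)
    (S : ((Fin s → ℤ) → X) → ((Fin s → ℤ) → X))
    (hS : ∀ (x : (Fin s → ℤ) → X) (i : Fin s → ℤ) (z : X),
      ∑ᶠ j : Fin s → ℤ, a (i - 2 • j) * dist (x j) (S x i) ^ 2 ≤
        ∑ᶠ j : Fin s → ℤ, a (i - 2 • j) * dist (x j) z ^ 2) :
    ∀ (x : (Fin s → ℤ) → X), (∃ M : ℝ, ∃ x₀ : X, ∀ j, dist (x j) x₀ ≤ M) →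
      ∀ (n : ℕ), 1 ≤ n → ∀ (i : Fin s → ℤ) (z₀ : X),
        dist (S^[n] x i) z₀ ≤
          ∑ᶠ k : Fin s → ℤ, A n (i - 2 ^ n • k) * dist (x k) z₀ := by
  have ha_fin_comp := finite_support_comp_sub_nsmul ha_fin two_ne_zero
  have hjensen (y : (Fin s → ℤ) → X) (i : Fin s → ℤ) (z₀ : X) :
      dist (S y i) z₀ ≤ ∑ᶠ j, a (i - 2 • j) * dist (y j) z₀ :=
    dist_le_finsum_of_forall_finsum_sq_dist_le hHad (ha_fin_comp i) (fun _ => ha_nonneg _)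
      (ha_sum i) (hS y i) z₀
  intro x _ n hn
  induction n, hn using Nat.le_induction with
  | base => simpa [hA1] using hjensen x
  | succ n hn ih =>
    intro i z₀
    have hAn := finite_support_comp_sub_nsmul
      (finite_support_of_succ_eq_finsum hAsucc ha_fin hA1 n hn) (pow_ne_zero n two_ne_zero)
    calc dist (S^[n + 1] x i) z₀
        ≤ ∑ᶠ j, a (i - 2 • j) * dist (S^[n] x j) z₀ := by
          rw [iterate_succ_apply']; exact hjensen _ i z₀
      _ ≤ ∑ᶠ j, a (i - 2 • j) * ∑ᶠ k, A n (j - 2 ^ n • k) * dist (x k) z₀ :=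
          finsum_mul_le_finsum_mul (ha_fin_comp i) (fun _ => ha_nonneg _) fun j => ih j z₀
      _ = ∑ᶠ k, ∑ᶠ j, a (i - 2 • j) * (A n (j - 2 ^ n • k) * dist (x k) z₀) :=
          finsum_mul_finsum_comm (ha_fin_comp i)
            fun j => (hAn j).subset (support_mul_subset_left _ _)
      _ = ∑ᶠ k, A (n + 1) (i - 2 ^ (n + 1) • k) * dist (x k) z₀ := by
          simp_rw [apply_succ_sub_pow_nsmul hAsucc, finsum_mul, mul_assoc]

/-- Jensen inequality for the iterates of a barycentric subdivision
scheme on a complete CAT(0) (Hadamard) space: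
`d((Sⁿx)_i, z₀) ≤ ∑ₖ a⁽ⁿ⁾(i - 2ⁿk) d(xₖ, z₀)`. -/
theorem iterated_scheme_jensen (s : ℕ) (X : Type*) [MetricSpace X]
    [CompleteSpace X]
    (hHad : ∀ x₀ x₁ : X, ∃ y : X, ∀ z : X,
      dist z y ^ 2 ≤ (1 / 2) * dist z x₀ ^ 2 + (1 / 2) * dist z x₁ ^ 2
        - (1 / 4) * dist x₀ x₁ ^ 2)
    (a : (Fin s → ℤ) → ℝ)
    (ha_nonneg : ∀ i, 0 ≤ a i)
    (ha_fin : (Function.support a).Finite)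
    (ha_sum : ∀ i : Fin s → ℤ, ∑ᶠ j : Fin s → ℤ, a (i - 2 • j) = 1)
    (A : ℕ → (Fin s → ℤ) → ℝ)
    (hA1 : A 1 = a)
    (hAsucc : ∀ n (i : Fin s → ℤ),
      A (n + 1) i = ∑ᶠ j : Fin s → ℤ, a (i - 2 • j) * A n j)
    (S : ((Fin s → ℤ) → X) → ((Fin s → ℤ) → X))
    (hS : ∀ (x : (Fin s → ℤ) → X) (i : Fin s → ℤ) (z : X),
      ∑ᶠ j : Fin s → ℤ, a (i - 2 • j) * dist (x j) (S x i) ^ 2 ≤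
        ∑ᶠ j : Fin s → ℤ, a (i - 2 • j) * dist (x j) z ^ 2) :
    ∀ (x : (Fin s → ℤ) → X), (∃ M : ℝ, ∃ x₀ : X, ∀ j, dist (x j) x₀ ≤ M) →
      ∀ (n : ℕ), 1 ≤ n → ∀ (i : Fin s → ℤ) (z₀ : X),
        dist (S^[n] x i) z₀ ≤
          ∑ᶠ k : Fin s → ℤ, A n (i - 2 ^ n • k) * dist (x k) z₀ :=
  iterated_scheme_jensen_general s X hHad a ha_nonneg ha_fin ha_sum A hA1 hAsucc S hS
end

section
/- Under the hypotheses of the previous statement, for all n ≥ 1 and all i, j ∈ ℤ^s: d((Sⁿx)_i, (Sⁿx)_j) ≤ ∑_{k,ℓ} a⁽ⁿ⁾(i − 2ⁿ k) a⁽ⁿ⁾(j − 2ⁿ ℓ) d(x_k, x_ℓ). -/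
/-- Sharp variance inequality + L¹ Jensen inequality for a minimizer of weighted
squared distances, in a space with "Hadamard midpoints". -/
theorem jensen_finset {X : Type*} [MetricSpace X]
    (hHad : ∀ x₀ x₁ : X, ∃ y : X, ∀ z : X,
      dist z y ^ 2 ≤ (1 / 2) * dist z x₀ ^ 2 + (1 / 2) * dist z x₁ ^ 2
        - (1 / 4) * dist x₀ x₁ ^ 2)
    {ι : Type*} (T : Finset ι) (w : ι → ℝ) (hw : ∀ j ∈ T, 0 ≤ w j)
    (hsum : ∑ j ∈ T, w j = 1) (x : ι → X) (b : X)
    (hb : ∀ z : X, ∑ j ∈ T, w j * dist (x j) b ^ 2 ≤ ∑ j ∈ T, w j * dist (x j) z ^ 2)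
    (z : X) : dist b z ≤ ∑ j ∈ T, w j * dist (x j) z := by
  classical
  choose mid hmid using hHad
  set F : X → ℝ := fun p => ∑ j ∈ T, w j * dist (x j) p ^ 2 with hF
  set c : ℝ := dist b z with hc
  -- iterated midpoints from z towards b
  let y : ℕ → X := fun n => Nat.rec z (fun _ p => mid b p) n
  have hy0 : y 0 = z := rfl
  have hys : ∀ n, y (n + 1) = mid b (y n) := fun _ => rfl
  have hdist : ∀ n, (1 / 2 : ℝ) ^ n * c ≤ dist b (y n) := by
    intro n
    induction n with
    | zero => simp [hy0, hc]
    | succ n ih =>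
      have h1 := hmid b (y n) (y n)
      have h2 : dist (y n) b = dist b (y n) := dist_comm _ _
      rw [h2] at h1
      simp only [dist_self] at h1
      -- dist (y n) (mid b (y n)) ≤ 1/2 * dist b (y n)
      have h3 : dist (y n) (mid b (y n)) ≤ 1 / 2 * dist b (y n) := by
        nlinarith [dist_nonneg (x := y n) (y := mid b (y n)),
          dist_nonneg (x := b) (y := y n)]
      have h4 : dist b (y n) ≤ dist b (y (n + 1)) + dist (y (n + 1)) (y n) :=
        dist_triangle _ _ _
      have h5 : dist (y (n + 1)) (y n) = dist (y n) (mid b (y n)) := by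
        rw [hys]; exact dist_comm _ _
      have hcn : (0:ℝ) ≤ (1/2:ℝ)^n * c := by positivity
      rw [pow_succ]
      rw [h5] at h4
      linarith
  have hF' : ∀ n, F (y n) ≤ (1 - (1 / 2 : ℝ) ^ n) * F b + (1 / 2 : ℝ) ^ n * F z
      - (1 / 2 : ℝ) ^ n * (1 - (1 / 2 : ℝ) ^ n) * c ^ 2 := by
    intro n
    induction n with
    | zero => simp [hy0]
    | succ n ih =>
      have hstep : F (y (n + 1)) ≤ (1 / 2) * F b + (1 / 2) * F (y n)
          - (1 / 4) * dist b (y n) ^ 2 := by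
        rw [hys]
        have h1 : ∀ j ∈ T, w j * dist (x j) (mid b (y n)) ^ 2 ≤
            w j * ((1 / 2) * dist (x j) b ^ 2 + (1 / 2) * dist (x j) (y n) ^ 2
              - (1 / 4) * dist b (y n) ^ 2) := fun j hj =>
          mul_le_mul_of_nonneg_left (hmid b (y n) (x j)) (hw j hj)
        have h2 : ∑ j ∈ T, w j * ((1 / 2) * dist (x j) b ^ 2
            + (1 / 2) * dist (x j) (y n) ^ 2 - (1 / 4) * dist b (y n) ^ 2)
            = (1 / 2) * F b + (1 / 2) * F (y n)
              - (1 / 4) * dist b (y n) ^ 2 * ∑ j ∈ T, w j := by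
          simp only [hF, Finset.mul_sum, Finset.sum_mul]
          rw [← Finset.sum_add_distrib, ← Finset.sum_sub_distrib]
          exact Finset.sum_congr rfl fun j _ => by ring
        calc F (mid b (y n)) ≤ _ := Finset.sum_le_sum h1
          _ = _ := by rw [h2, hsum]; ring
      have h3 : ((1 / 2 : ℝ) ^ n * c) ^ 2 ≤ dist b (y n) ^ 2 :=
        pow_le_pow_left₀ (mul_nonneg (by positivity) (by rw [hc]; exact dist_nonneg))
          (hdist n) 2
      rw [pow_succ]
      nlinarith [hstep, ih, h3]
  -- sharp variance inequality
  have hvar : c ^ 2 + F b ≤ F z := by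
    have hstep : ∀ n : ℕ, F b + (1 - (1 / 2 : ℝ) ^ n) * c ^ 2 ≤ F z := by
      intro n
      have h1 : F b ≤ F (y n) := hb (y n)
      have h2 := hF' n
      have ht : (0 : ℝ) < (1 / 2 : ℝ) ^ n := by positivity
      have h3 : (1 / 2 : ℝ) ^ n * (F b + (1 - (1 / 2 : ℝ) ^ n) * c ^ 2)
          ≤ (1 / 2 : ℝ) ^ n * F z := by nlinarith
      exact le_of_mul_le_mul_left h3 ht
    have hlim : Filter.Tendsto
        (fun n : ℕ => F b + (1 - (1 / 2 : ℝ) ^ n) * c ^ 2)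
        Filter.atTop (nhds (F b + (1 - 0) * c ^ 2)) := by
      have h0 : Filter.Tendsto (fun n : ℕ => (1 / 2 : ℝ) ^ n) Filter.atTop (nhds 0) :=
        tendsto_pow_atTop_nhds_zero_of_lt_one (by norm_num) (by norm_num)
      exact Filter.Tendsto.const_add _
        (((tendsto_const_nhds.sub h0)).mul_const _)
    have := le_of_tendsto hlim (Filter.Eventually.of_forall hstep)
    linarith
  -- L¹ Jensen
  have hterm : ∀ j ∈ T, w j * (dist (x j) z ^ 2 - 2 * c * dist (x j) z + c ^ 2)
      ≤ w j * dist (x j) b ^ 2 := by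
    intro j hj
    apply mul_le_mul_of_nonneg_left _ (hw j hj)
    have h1 : dist (x j) z ≤ dist (x j) b + c := by
      have := dist_triangle (x j) b z; linarith [this]
    have h2 : c ≤ dist b (x j) + dist (x j) z := dist_triangle b (x j) z
    rw [dist_comm b (x j)] at h2
    nlinarith [dist_nonneg (x := x j) (y := b)]
  have hexp : ∑ j ∈ T, w j * (dist (x j) z ^ 2 - 2 * c * dist (x j) z + c ^ 2)
      = F z - 2 * c * (∑ j ∈ T, w j * dist (x j) z) + c ^ 2 * ∑ j ∈ T, w j := by
    calc ∑ j ∈ T, w j * (dist (x j) z ^ 2 - 2 * c * dist (x j) z + c ^ 2)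
        = ∑ j ∈ T, (w j * dist (x j) z ^ 2 - 2 * c * (w j * dist (x j) z)
            + c ^ 2 * w j) := Finset.sum_congr rfl fun j _ => by ring
      _ = _ := by
          rw [Finset.sum_add_distrib, Finset.sum_sub_distrib, ← Finset.mul_sum,
            ← Finset.mul_sum]
  have hE : (0 : ℝ) ≤ ∑ j ∈ T, w j * dist (x j) z :=
    Finset.sum_nonneg fun j hj => mul_nonneg (hw j hj) dist_nonneg
  have h6 : F z - 2 * c * (∑ j ∈ T, w j * dist (x j) z) + c ^ 2 ≤ F b := by
    have := Finset.sum_le_sum hterm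
    rw [hexp, hsum] at this
    linarith
  have h7 : 2 * c ^ 2 ≤ 2 * c * (∑ j ∈ T, w j * dist (x j) z) := by linarith
  rcases (dist_nonneg (x := b) (y := z)).eq_or_lt with h | h
  · rw [hc, ← h]; exact hE
  · nlinarith



/-- double Jensen inequality for iterates of a barycentric
subdivision scheme on a complete CAT(0) (Hadamard) space:
`d((Sⁿx)_i, (Sⁿx)_j) ≤ ∑_{k,ℓ} a⁽ⁿ⁾(i-2ⁿk) a⁽ⁿ⁾(j-2ⁿℓ) d(xₖ, x_ℓ)`. -/
theorem iterated_scheme_double_jensen (s : ℕ) (X : Type*) [MetricSpace X]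
    [CompleteSpace X]
    (hHad : ∀ x₀ x₁ : X, ∃ y : X, ∀ z : X,
      dist z y ^ 2 ≤ (1 / 2) * dist z x₀ ^ 2 + (1 / 2) * dist z x₁ ^ 2
        - (1 / 4) * dist x₀ x₁ ^ 2)
    (a : (Fin s → ℤ) → ℝ)
    (ha_nonneg : ∀ i, 0 ≤ a i)
    (ha_fin : (Function.support a).Finite)
    (ha_sum : ∀ i : Fin s → ℤ, ∑ᶠ j : Fin s → ℤ, a (i - 2 • j) = 1)
    (A : ℕ → (Fin s → ℤ) → ℝ)
    (hA1 : A 1 = a)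
    (hAsucc : ∀ n (i : Fin s → ℤ),
      A (n + 1) i = ∑ᶠ j : Fin s → ℤ, a (i - 2 • j) * A n j)
    (S : ((Fin s → ℤ) → X) → ((Fin s → ℤ) → X))
    (hS : ∀ (x : (Fin s → ℤ) → X) (i : Fin s → ℤ) (z : X),
      ∑ᶠ j : Fin s → ℤ, a (i - 2 • j) * dist (x j) (S x i) ^ 2 ≤
        ∑ᶠ j : Fin s → ℤ, a (i - 2 • j) * dist (x j) z ^ 2) :
    ∀ (x : (Fin s → ℤ) → X), (∃ M : ℝ, ∃ x₀ : X, ∀ j, dist (x j) x₀ ≤ M) →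
      ∀ (n : ℕ), 1 ≤ n → ∀ (i j : Fin s → ℤ),
        dist (S^[n] x i) (S^[n] x j) ≤
          ∑ᶠ k : Fin s → ℤ, ∑ᶠ ℓ : Fin s → ℤ,
            A n (i - 2 ^ n • k) * A n (j - 2 ^ n • ℓ) * dist (x k) (x ℓ) := by
  classical
  -- injectivity of k ↦ i - c • k
  have hinj : ∀ (c : ℕ), c ≠ 0 → ∀ i : Fin s → ℤ,
      Function.Injective (fun k : Fin s → ℤ => i - c • k) := by
    intro c hc i k l h
    simp only at h
    have h2 : c • k = c • l := by
      have := sub_right_injective h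
      exact this
    funext t
    have h3 := congrFun h2 t
    simp only [Pi.smul_apply, nsmul_eq_mul] at h3
    exact mul_left_cancel₀ (by exact_mod_cast hc) h3
  -- finiteness of supports of translated-dilated weights
  have hsupp : ∀ (c : ℕ), c ≠ 0 → ∀ (f : (Fin s → ℤ) → ℝ),
      (Function.support f).Finite → ∀ i : Fin s → ℤ,
      (Function.support fun k : Fin s → ℤ => f (i - c • k)).Finite := by
    intro c hc f hf i
    have h1 : (Function.support fun k : Fin s → ℤ => f (i - c • k)) ⊆
        (fun k : Fin s → ℤ => i - c • k) ⁻¹' (Function.support f) := fun k hk => hk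
    exact (hf.preimage ((hinj c hc i).injOn)).subset h1
  -- finiteness of support of A n
  have hAfin : ∀ m, 1 ≤ m → (Function.support (A m)).Finite := by
    intro m hm
    induction m, hm using Nat.le_induction with
    | base => rw [hA1]; exact ha_fin
    | succ n hn ih =>
      have hsub : Function.support (A (n + 1)) ⊆
          (fun p : (Fin s → ℤ) × (Fin s → ℤ) => p.1 + 2 • p.2) ''
            ((Function.support a) ×ˢ (Function.support (A n))) := by
        intro i hi
        rw [Function.mem_support, hAsucc] at hi
        have hex : ∃ j, a (i - 2 • j) * A n j ≠ 0 := by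
          by_contra hcon
          push_neg at hcon
          exact hi (finsum_eq_zero_of_forall_eq_zero hcon)
        obtain ⟨j, hj⟩ := hex
        rcases mul_ne_zero_iff.mp hj with ⟨h1, h2⟩
        exact ⟨(i - 2 • j, j), ⟨h1, h2⟩, by simp⟩
      exact ((ha_fin.prod ih).image _).subset hsub
  -- nonnegativity of A n
  have hAnn : ∀ m, 1 ≤ m → ∀ i, 0 ≤ A m i := by
    intro m hm
    induction m, hm using Nat.le_induction with
    | base => rw [hA1]; exact ha_nonneg
    | succ n hn ih =>
      intro i
      rw [hAsucc]
      exact finsum_nonneg fun j => mul_nonneg (ha_nonneg _) (ih _)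
  -- key recursion
  have hkey : ∀ (n : ℕ) (i k : Fin s → ℤ),
      A (n + 1) (i - 2 ^ (n + 1) • k) = ∑ᶠ j, a (i - 2 • j) * A n (j - 2 ^ n • k) := by
    intro n i k
    rw [hAsucc]
    rw [← finsum_comp_equiv (Equiv.addRight ((2 : ℕ) ^ n • k))
      (f := fun j => a (i - 2 • j) * A n (j - 2 ^ n • k))]
    apply finsum_congr
    intro j
    simp only [Equiv.coe_addRight]
    have e1 : i - 2 ^ (n + 1) • k - 2 • j = i - 2 • (j + 2 ^ n • k) := by
      rw [smul_add, smul_smul, ← pow_succ']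
      abel
    have e2 : j + 2 ^ n • k - 2 ^ n • k = j := by simp
    rw [e1, e2]
  -- one-step Jensen inequality
  have hJ1 : ∀ (x : (Fin s → ℤ) → X) (i : Fin s → ℤ) (z : X),
      dist (S x i) z ≤ ∑ᶠ j, a (i - 2 • j) * dist (x j) z := by
    intro x i z
    have hTfin := hsupp 2 two_ne_zero a ha_fin i
    set T := hTfin.toFinset with hT
    have hconv : ∀ g : (Fin s → ℤ) → ℝ,
        ∑ᶠ j, a (i - 2 • j) * g j = ∑ j ∈ T, a (i - 2 • j) * g j := by
      intro g
      apply finsum_eq_finset_sum_of_support_subset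
      intro j hj
      have : a (i - 2 • j) ≠ 0 := fun h0 => by
        simp only [Function.mem_support, h0, zero_mul, ne_eq, not_true_eq_false] at hj
      simpa [hT, Set.Finite.mem_toFinset] using this
    have hsumT : ∑ j ∈ T, a (i - 2 • j) = 1 := by
      rw [← ha_sum i]
      symm
      apply finsum_eq_finset_sum_of_support_subset
      intro j hj
      simpa [hT, Set.Finite.mem_toFinset] using hj
    rw [hconv]
    exact jensen_finset hHad T _ (fun j _ => ha_nonneg _) hsumT x (S x i)
      (fun z' => by rw [← hconv, ← hconv]; exact hS x i z') z
  -- n-step Jensen inequality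
  have hJ : ∀ (x : (Fin s → ℤ) → X) (n : ℕ), 1 ≤ n → ∀ (i : Fin s → ℤ) (z : X),
      dist (S^[n] x i) z ≤ ∑ᶠ k, A n (i - 2 ^ n • k) * dist (x k) z := by
    intro x n hn
    induction n, hn using Nat.le_induction with
    | base =>
      intro i z
      simpa [hA1, pow_one] using hJ1 x i z
    | succ n hn ih =>
      intro i z
      have hTfin := hsupp 2 two_ne_zero a ha_fin i
      set T := hTfin.toFinset with hT
      have hVfin : ∀ j : Fin s → ℤ,
          (Function.support fun k : Fin s → ℤ => A n (j - 2 ^ n • k)).Finite :=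
        fun j => hsupp (2 ^ n) (by positivity) (A n) (hAfin n hn) j
      have hKfin : (⋃ j ∈ T,
          (Function.support fun k : Fin s → ℤ => A n (j - 2 ^ n • k))).Finite :=
        T.finite_toSet.biUnion fun j _ => hVfin j
      set K := hKfin.toFinset with hK
      have hconvT : ∀ g : (Fin s → ℤ) → ℝ,
          ∑ᶠ j, a (i - 2 • j) * g j = ∑ j ∈ T, a (i - 2 • j) * g j := by
        intro g
        apply finsum_eq_finset_sum_of_support_subset
        intro j hj
        have : a (i - 2 • j) ≠ 0 := fun h0 => by
          simp only [Function.mem_support, h0, zero_mul, ne_eq, not_true_eq_false] at hj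
        simpa [hT, Set.Finite.mem_toFinset] using this
      have hconvK : ∀ (j : Fin s → ℤ), j ∈ T → ∀ g : (Fin s → ℤ) → ℝ,
          ∑ᶠ k, A n (j - 2 ^ n • k) * g k = ∑ k ∈ K, A n (j - 2 ^ n • k) * g k := by
        intro j hj g
        apply finsum_eq_finset_sum_of_support_subset
        intro k hk
        have h0 : A n (j - 2 ^ n • k) ≠ 0 := fun h0 => by
          simp only [Function.mem_support, h0, zero_mul, ne_eq, not_true_eq_false] at hk
        refine Finset.mem_coe.mpr (hKfin.mem_toFinset.mpr ?_)
        refine Set.mem_biUnion hj ?_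
        exact h0
      rw [Function.iterate_succ_apply']
      calc dist (S (S^[n] x) i) z
          ≤ ∑ᶠ j, a (i - 2 • j) * dist (S^[n] x j) z := hJ1 (S^[n] x) i z
        _ = ∑ j ∈ T, a (i - 2 • j) * dist (S^[n] x j) z := hconvT _
        _ ≤ ∑ j ∈ T, a (i - 2 • j) * (∑ k ∈ K, A n (j - 2 ^ n • k) * dist (x k) z) := by
            refine Finset.sum_le_sum fun j hj => mul_le_mul_of_nonneg_left ?_ (ha_nonneg _)
            rw [← hconvK j hj]
            exact ih j z
        _ = ∑ k ∈ K, (∑ j ∈ T, a (i - 2 • j) * A n (j - 2 ^ n • k)) * dist (x k) z := by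
            simp only [Finset.mul_sum, Finset.sum_mul]
            rw [Finset.sum_comm]
            exact Finset.sum_congr rfl fun k _ => Finset.sum_congr rfl fun j _ => by ring
        _ = ∑ k ∈ K, A (n + 1) (i - 2 ^ (n + 1) • k) * dist (x k) z := by
            refine Finset.sum_congr rfl fun k _ => ?_
            congr 1
            rw [hkey n i k]
            symm
            apply finsum_eq_finset_sum_of_support_subset
            intro j hj
            have : a (i - 2 • j) ≠ 0 := fun h0 => by
              simp only [Function.mem_support, h0, zero_mul, ne_eq, not_true_eq_false] at hj
            simpa [hT, Set.Finite.mem_toFinset] using this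
        _ = ∑ᶠ k, A (n + 1) (i - 2 ^ (n + 1) • k) * dist (x k) z := by
            symm
            apply finsum_eq_finset_sum_of_support_subset
            intro k hk
            have h5 : A (n + 1) (i - 2 ^ (n + 1) • k) ≠ 0 := fun h0 => by
              simp only [Function.mem_support, h0, zero_mul, ne_eq, not_true_eq_false] at hk
            rw [hkey n i k] at h5
            have hex : ∃ j, a (i - 2 • j) * A n (j - 2 ^ n • k) ≠ 0 := by
              by_contra hcon
              push_neg at hcon
              exact h5 (finsum_eq_zero_of_forall_eq_zero hcon)
            obtain ⟨j, hj⟩ := hex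
            rcases mul_ne_zero_iff.mp hj with ⟨hj1, hj2⟩
            have hjT : j ∈ ↑T := by simpa [hT, Set.Finite.mem_toFinset] using hj1
            have : k ∈ ⋃ j ∈ T, (Function.support fun k : Fin s → ℤ => A n (j - 2 ^ n • k)) :=
              Set.mem_biUnion hjT hj2
            exact Finset.mem_coe.mpr (hKfin.mem_toFinset.mpr this)
  -- main statement
  intro x _ n hn i j
  have hWi := hsupp (2 ^ n) (by positivity) (A n) (hAfin n hn) i
  have hWj := hsupp (2 ^ n) (by positivity) (A n) (hAfin n hn) j
  set Ti := hWi.toFinset with hTi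
  set Tj := hWj.toFinset with hTj
  have hconvI : ∀ g : (Fin s → ℤ) → ℝ,
      ∑ᶠ k, A n (i - 2 ^ n • k) * g k = ∑ k ∈ Ti, A n (i - 2 ^ n • k) * g k := by
    intro g
    apply finsum_eq_finset_sum_of_support_subset
    intro k hk
    have : A n (i - 2 ^ n • k) ≠ 0 := fun h0 => by
      simp only [Function.mem_support, h0, zero_mul, ne_eq, not_true_eq_false] at hk
    simpa [hTi, Set.Finite.mem_toFinset] using this
  have hconvJ : ∀ g : (Fin s → ℤ) → ℝ,
      ∑ᶠ ℓ, A n (j - 2 ^ n • ℓ) * g ℓ = ∑ ℓ ∈ Tj, A n (j - 2 ^ n • ℓ) * g ℓ := by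
    intro g
    apply finsum_eq_finset_sum_of_support_subset
    intro ℓ hℓ
    have : A n (j - 2 ^ n • ℓ) ≠ 0 := fun h0 => by
      simp only [Function.mem_support, h0, zero_mul, ne_eq, not_true_eq_false] at hℓ
    simpa [hTj, Set.Finite.mem_toFinset] using this
  calc dist (S^[n] x i) (S^[n] x j)
      ≤ ∑ᶠ k, A n (i - 2 ^ n • k) * dist (x k) (S^[n] x j) := hJ x n hn i _
    _ = ∑ k ∈ Ti, A n (i - 2 ^ n • k) * dist (x k) (S^[n] x j) := hconvI _
    _ ≤ ∑ k ∈ Ti, A n (i - 2 ^ n • k) *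
          (∑ ℓ ∈ Tj, A n (j - 2 ^ n • ℓ) * dist (x ℓ) (x k)) := by
        refine Finset.sum_le_sum fun k _ =>
          mul_le_mul_of_nonneg_left ?_ (hAnn n hn _)
        rw [← hconvJ fun ℓ => dist (x ℓ) (x k), dist_comm]
        exact hJ x n hn j (x k)
    _ = ∑ᶠ k, ∑ᶠ ℓ, A n (i - 2 ^ n • k) * A n (j - 2 ^ n • ℓ) * dist (x k) (x ℓ) := by
        symm
        have houter : (Function.support fun k => ∑ᶠ ℓ,
            A n (i - 2 ^ n • k) * A n (j - 2 ^ n • ℓ) * dist (x k) (x ℓ)) ⊆ ↑Ti := by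
          intro k hk
          have : A n (i - 2 ^ n • k) ≠ 0 := by
            intro h0
            apply hk
            apply finsum_eq_zero_of_forall_eq_zero
            intro ℓ
            show A n (i - 2 ^ n • k) * A n (j - 2 ^ n • ℓ) * dist (x k) (x ℓ) = 0
            rw [h0]; ring
          simpa [hTi, Set.Finite.mem_toFinset] using this
        rw [finsum_eq_finset_sum_of_support_subset _ houter]
        refine Finset.sum_congr rfl fun k _ => ?_
        have hinner : (Function.support fun ℓ =>
            A n (i - 2 ^ n • k) * A n (j - 2 ^ n • ℓ) * dist (x k) (x ℓ)) ⊆ ↑Tj := by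
          intro ℓ hℓ
          have : A n (j - 2 ^ n • ℓ) ≠ 0 := by
            intro h0
            apply hℓ
            show A n (i - 2 ^ n • k) * A n (j - 2 ^ n • ℓ) * dist (x k) (x ℓ) = 0
            rw [h0]; ring
          simpa [hTj, Set.Finite.mem_toFinset] using this
        rw [finsum_eq_finset_sum_of_support_subset _ hinner, Finset.mul_sum]
        exact Finset.sum_congr rfl fun ℓ _ => by rw [dist_comm (x k) (x ℓ)]; ring
end

section
/- Let (X,d) be a complete CAT(0) space and f : ℝ^s → X Lipschitz with constant C for a norm ‖·‖ on ℝ^s. Let S be a convergent barycentric subdivision scheme whose mask a is supported in {x : ‖x‖ ≤ r}, and set x_i = f(h·i) for h > 0. Then for all n, k ∈ ℕ with k ≤ n and all i ∈ ℤ^s: d((Sⁿx)_{2^{n−k} i}, f(h·i/2^k)) ≤ r·C·h. -/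
/-!
By the Jensen inequality, `(Sⁿx)_{2^{n-k}i}` lies within the weighted average, with weights
`a⁽ⁿ⁾(2^{n-k}i - 2ⁿj)` summing to one, of the distances `d(x_j, f(hi/2^k))`. Only the `j` with
nonzero weight contribute, and for them `‖hj - hi/2^k‖ = (h/2ⁿ)‖2^{n-k}i - 2ⁿj‖ ≤ h(2ⁿ-1)r/2ⁿ ≤ hr`
by the support bound on the iterated mask; Lipschitz continuity of `f` turns this into `Chr`.
-/

theorem finsum_mul_le_of_finsum_eq_one {ι : Type*} {w b : ι → ℝ} {M : ℝ}
    (hw_nonneg : ∀ j, 0 ≤ w j) (hw_sum : ∑ᶠ j, w j = 1)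
    (hb : ∀ j, w j ≠ 0 → b j ≤ M) : ∑ᶠ j, w j * b j ≤ M := by
  have hw_fin := hasFiniteSupport_of_finsum_eq_one hw_sum
  calc ∑ᶠ j, w j * b j ≤ ∑ᶠ j, w j * M := by
        refine finsum_le_finsum' (hw_fin.subset (Function.support_mul_subset_left _ _))
          (hw_fin.subset (Function.support_mul_subset_left _ _)) fun j => ?_
        rcases eq_or_ne (w j) 0 with hj | hj
        · simp [hj]
        · exact mul_le_mul_of_nonneg_left (hb j hj) (hw_nonneg j)
    _ = M := by rw [← finsum_mul, hw_sum, one_mul]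

theorem grid_sub_dyadic_eq_smul {ι : Type*} (h : ℝ) {n k : ℕ} (hk : k ≤ n) (i j : ι → ℤ) :
    ((fun t => h * (j t : ℝ)) - fun t => h * ((i t : ℝ) / 2 ^ k)) =
      (-(h / 2 ^ n)) • fun t => (((2 ^ (n - k) • i - 2 ^ n • j) t : ℤ) : ℝ) := by
  have hpow : (2 : ℝ) ^ n = 2 ^ (n - k) * 2 ^ k := by rw [← pow_add, Nat.sub_add_cancel hk]
  funext t
  simp only [Pi.sub_apply, Pi.smul_apply, smul_eq_mul, nsmul_eq_mul, Pi.mul_apply, Pi.pow_apply,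
    Pi.ofNat_apply, Nat.cast_pow, Nat.cast_ofNat]
  push_cast
  rw [hpow]
  field_simp
  ring

theorem seminorm_grid_sub_dyadic_le {ι : Type*} (ν : Seminorm ℝ (ι → ℝ)) {h r : ℝ}
    (hh : 0 ≤ h) (hr : 0 ≤ r) {n k : ℕ} (hk : k ≤ n) (i j : ι → ℤ)
    (hij : ν (fun t => (((2 ^ (n - k) • i - 2 ^ n • j) t : ℤ) : ℝ)) ≤ (2 ^ n - 1) * r) :
    ν ((fun t => h * (j t : ℝ)) - fun t => h * ((i t : ℝ) / 2 ^ k)) ≤ h * r := by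
  have h2n : (0 : ℝ) < 2 ^ n := by positivity
  rw [grid_sub_dyadic_eq_smul h hk, map_smul_eq_mul, norm_neg, Real.norm_of_nonneg (by positivity)]
  calc h / 2 ^ n * ν _ ≤ h / 2 ^ n * ((2 ^ n - 1) * r) := by gcongr
    _ ≤ h * r := by
      rw [div_mul_eq_mul_div, div_le_iff₀ h2n]
      nlinarith [mul_nonneg hh hr]

theorem barycentric_approximation_general (s : ℕ) (X : Type*) [MetricSpace X]
    (ν : Seminorm ℝ (Fin s → ℝ))
    (f : (Fin s → ℝ) → X) (C : ℝ) (hC : 0 < C)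
    (hf : ∀ u v : Fin s → ℝ, dist (f u) (f v) ≤ C * ν (u - v))
    (r : ℝ) (hr : 0 < r)
    (A : ℕ → (Fin s → ℤ) → ℝ)
    (hA_nonneg : ∀ n i, 0 ≤ A n i)
    (hA_supp : ∀ (n : ℕ), 1 ≤ n → ∀ i : Fin s → ℤ, A n i ≠ 0 →
      ν (fun t => (i t : ℝ)) ≤ ((2 : ℝ) ^ n - 1) * r)
    (hA_sum : ∀ (n : ℕ) (i : Fin s → ℤ), ∑ᶠ j : Fin s → ℤ, A n (i - 2 ^ n • j) = 1)
    (S : ((Fin s → ℤ) → X) → ((Fin s → ℤ) → X))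
    (hJensen : ∀ (x : (Fin s → ℤ) → X) (n : ℕ), 1 ≤ n →
      ∀ (i : Fin s → ℤ) (z₀ : X),
        dist (S^[n] x i) z₀ ≤ ∑ᶠ k : Fin s → ℤ, A n (i - 2 ^ n • k) * dist (x k) z₀)
    (h : ℝ) (hh : 0 < h)
    (x : (Fin s → ℤ) → X)
    (hx : ∀ i : Fin s → ℤ, x i = f fun t => h * (i t : ℝ)) :
    ∀ (n k : ℕ), 1 ≤ n → k ≤ n → ∀ i : Fin s → ℤ,
      dist (S^[n] x (2 ^ (n - k) • i)) (f fun t => h * ((i t : ℝ) / 2 ^ k)) ≤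
        r * C * h := by
  intro n k hn hk i
  refine (hJensen x n hn _ _).trans <|
    finsum_mul_le_of_finsum_eq_one (fun _ => hA_nonneg n _) (hA_sum n _) fun j hj => ?_
  calc dist (x j) (f fun t => h * ((i t : ℝ) / 2 ^ k))
      ≤ C * ν ((fun t => h * (j t : ℝ)) - fun t => h * ((i t : ℝ) / 2 ^ k)) := by
        rw [hx j]
        exact hf _ _
    _ ≤ C * (h * r) := by
        gcongr
        exact seminorm_grid_sub_dyadic_le ν hh.le hr.le hk i j (hA_supp n hn _ hj)
    _ = r * C * h := by ring

/-- approximation of a Lipschitz function by a convergent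
barycentric subdivision scheme whose mask is supported in the `ν`-ball of
radius `r`: sampling on the grid `hℤ^s` gives
`d((Sⁿx)_{2^{n-k}i}, f(hi/2^k)) ≤ rCh`. -/
theorem barycentric_approximation (s : ℕ) (X : Type*) [MetricSpace X]
    [CompleteSpace X]
    (ν : Seminorm ℝ (Fin s → ℝ))
    (f : (Fin s → ℝ) → X) (C : ℝ) (hC : 0 < C)
    (hf : ∀ u v : Fin s → ℝ, dist (f u) (f v) ≤ C * ν (u - v))
    (r : ℝ) (hr : 0 < r)
    (a : (Fin s → ℤ) → ℝ)
    (ha_nonneg : ∀ i, 0 ≤ a i)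
    (ha_fin : (Function.support a).Finite)
    (ha_sum : ∀ i : Fin s → ℤ, ∑ᶠ j : Fin s → ℤ, a (i - 2 • j) = 1)
    (ha_supp : ∀ i : Fin s → ℤ, a i ≠ 0 → ν (fun t => (i t : ℝ)) ≤ r)
    (A : ℕ → (Fin s → ℤ) → ℝ)
    (hA_nonneg : ∀ n i, 0 ≤ A n i)
    (hA1 : A 1 = a)
    (hAsucc : ∀ n (i : Fin s → ℤ),
      A (n + 1) i = ∑ᶠ j : Fin s → ℤ, a (i - 2 • j) * A n j)
    (hA_supp : ∀ (n : ℕ), 1 ≤ n → ∀ i : Fin s → ℤ, A n i ≠ 0 →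
      ν (fun t => (i t : ℝ)) ≤ ((2 : ℝ) ^ n - 1) * r)
    (hA_sum : ∀ (n : ℕ) (i : Fin s → ℤ), ∑ᶠ j : Fin s → ℤ, A n (i - 2 ^ n • j) = 1)
    (S : ((Fin s → ℤ) → X) → ((Fin s → ℤ) → X))
    (hJensen : ∀ (x : (Fin s → ℤ) → X) (n : ℕ), 1 ≤ n →
      ∀ (i : Fin s → ℤ) (z₀ : X),
        dist (S^[n] x i) z₀ ≤ ∑ᶠ k : Fin s → ℤ, A n (i - 2 ^ n • k) * dist (x k) z₀)
    (h : ℝ) (hh : 0 < h)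
    (x : (Fin s → ℤ) → X)
    (hx : ∀ i : Fin s → ℤ, x i = f fun t => h * (i t : ℝ)) :
    ∀ (n k : ℕ), 1 ≤ n → k ≤ n → ∀ i : Fin s → ℤ,
      dist (S^[n] x (2 ^ (n - k) • i)) (f fun t => h * ((i t : ℝ) / 2 ^ k)) ≤
        r * C * h :=
  barycentric_approximation_general s X ν f C hC hf r hr A hA_nonneg hA_supp hA_sum S hJensen h hh x
    hx
end
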